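/- arXiv:1807.07519 — 5 statements merged into one kernel-verified Lean document; each statement's English description precedes it below -/
import Mathlib

section
/- Let H be a real Hilbert space, let φ, ψ ∈ H with ⟨φ,φ⟩ = 1, ⟨φ,ψ⟩ = 0 and ⟨ψ,ψ⟩ ≤ 1, and let P be a self-adjoint contraction on H with 0 ≤ P ≤ I. Set f = αφ + ψ for some α ∈ ℝ. Then ⟨f, P f⟩ ≥ α²⟨φ, Pφ⟩ − 2|α| ⟨φ, (I − P)²φ⟩^{1/2}. -/
open scoped RealInnerProductSpace

/-- Let `H` be a real Hilbert space, `φ, ψ ∈ H` with `⟨φ,φ⟩ = 1`, `⟨φ,ψ⟩ = 0`,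
`⟨ψ,ψ⟩ ≤ 1`, and let `P` be a self-adjoint operator with `0 ≤ P ≤ I`.
Set `f = α φ + ψ`. Then `⟨f, P f⟩ ≥ α² ⟨φ, Pφ⟩ − 2|α| ⟨φ, (I − P)² φ⟩^{1/2}`. -/
theorem stmt2 {H : Type*} [NormedAddCommGroup H] [InnerProductSpace ℝ H] [CompleteSpace H]
    (P : H →L[ℝ] H)
    (hsa : ∀ x y : H, ⟪P x, y⟫ = ⟪x, P y⟫)
    (hpos : ∀ x : H, 0 ≤ ⟪x, P x⟫)
    (hcontr : ∀ x : H, ⟪x, P x⟫ ≤ ⟪x, x⟫)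
    (φ ψ : H) (hφ : ⟪φ, φ⟫ = 1) (hortho : ⟪φ, ψ⟫ = 0) (hψ : ⟪ψ, ψ⟫ ≤ 1)
    (α : ℝ) (f : H) (hf : f = α • φ + ψ) :
    ⟪f, P f⟫ ≥ α ^ 2 * ⟪φ, P φ⟫ -
      2 * |α| * Real.sqrt ⟪φ, (ContinuousLinearMap.id ℝ H - P)
        ((ContinuousLinearMap.id ℝ H - P) φ)⟫ := by
  set Q : H →L[ℝ] H := ContinuousLinearMap.id ℝ H - P with hQ
  have hQapp : ∀ x : H, Q x = x - P x := fun x => rfl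
  -- the sqrt term is ‖Q φ‖
  have hQsa : ∀ x y : H, ⟪Q x, y⟫ = ⟪x, Q y⟫ := by
    intro x y
    rw [hQapp x, hQapp y, inner_sub_left, inner_sub_right, hsa]
  have hsq : ⟪φ, Q (Q φ)⟫ = ⟪Q φ, Q φ⟫ := (hQsa φ (Q φ)).symm
  have hsqrt : Real.sqrt ⟪φ, Q (Q φ)⟫ = ‖Q φ‖ := by
    rw [hsq, real_inner_self_eq_norm_sq, Real.sqrt_sq (norm_nonneg _)]
  -- expand ⟪f, P f⟫
  have hexp : ⟪f, P f⟫ = α ^ 2 * ⟪φ, P φ⟫ + 2 * α * ⟪φ, P ψ⟫ + ⟪ψ, P ψ⟫ := by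
    have hψφ : ⟪ψ, P φ⟫ = ⟪φ, P ψ⟫ := by
      rw [← hsa ψ φ, real_inner_comm]
    simp only [hf, map_add, map_smul, inner_add_left, inner_add_right,
      inner_smul_left, inner_smul_right, RCLike.conj_to_real, hψφ]
    ring
  -- bound cross term
  have hφψ : ⟪φ, P ψ⟫ = -⟪Q φ, ψ⟫ := by
    rw [hQapp φ, inner_sub_left, hortho, hsa]
    ring
  have hψnorm : ‖ψ‖ ≤ 1 := by
    have := real_inner_self_eq_norm_sq ψ
    nlinarith [norm_nonneg ψ]
  have hcs : |⟪Q φ, ψ⟫| ≤ ‖Q φ‖ := by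
    calc |⟪Q φ, ψ⟫| ≤ ‖Q φ‖ * ‖ψ‖ := abs_real_inner_le_norm _ _
    _ ≤ ‖Q φ‖ * 1 := by
        exact mul_le_mul_of_nonneg_left hψnorm (norm_nonneg _)
    _ = ‖Q φ‖ := mul_one _
  have habs : |α * ⟪Q φ, ψ⟫| ≤ |α| * ‖Q φ‖ := by
    rw [abs_mul]
    exact mul_le_mul_of_nonneg_left hcs (abs_nonneg _)
  have h1 := abs_le.mp habs
  have h2 := hpos ψ
  rw [hexp, hφψ, hsqrt]
  nlinarith [h1.1, h1.2]
end

section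
/- (Screening property for the Duarte model) Let U = {{−e₁,e₂},{−e₁,−e₂},{e₂,−e₂}} be the Duarte update family. Let S = {(i,b_i)}_{i=1}^n ⊆ ℤ² with b_{i+1} ≤ b_i for all i ∈ [n−1], and set S₊ = {(i,j) : i ∈ [n], j > b_i} and S₋ = {(i,j) : i ∈ [n], j < b_i}. If Y, Y' ⊆ ℤ² satisfy S ⊆ Y and Y ∩ S₊ᶜ = Y' ∩ S₊ᶜ, then [Y] ∩ S₋ = [Y'] ∩ S₋. -/
open Set

/-- The Duarte update family: 2-subsets of `{-e₁, e₂, -e₂}`. -/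
def duarteU : Set (Set (ℤ × ℤ)) :=
  {{(-1, 0), (0, 1)}, {(-1, 0), (0, -1)}, {(0, 1), (0, -1)}}

def bootStep (U : Set (Set (ℤ × ℤ))) (Y : Set (ℤ × ℤ)) : Set (ℤ × ℤ) :=
  Y ∪ {x | ∃ X ∈ U, (fun y => y + x) '' X ⊆ Y}

def bootIter (U : Set (Set (ℤ × ℤ))) (Y : Set (ℤ × ℤ)) : ℕ → Set (ℤ × ℤ)
  | 0 => Y
  | t + 1 => bootStep U (bootIter U Y t)

/-- The closure `[Y]` of `Y` under the `U`-bootstrap process. -/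
def bootClosure (U : Set (Set (ℤ × ℤ))) (Y : Set (ℤ × ℤ)) : Set (ℤ × ℤ) :=
  ⋃ t, bootIter U Y t

lemma bootIter_self (U : Set (Set (ℤ × ℤ))) (Y : Set (ℤ × ℤ)) :
    ∀ t, Y ⊆ bootIter U Y t := by
  intro t
  induction t with
  | zero => exact subset_rfl
  | succ t ih => exact ih.trans Set.subset_union_left

/-- Screening property for the Duarte model: a weakly decreasing staircase
`S = {(i, b_i)}_{i=1}^n` of infected sites screens the region `Sminus` below it
from discrepancies of the initial infection outside `Splusᶜ`. -/
theorem stmt5 (n : ℕ) (b : ℕ → ℤ)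
    (hb : ∀ i, 1 ≤ i → i < n → b (i + 1) ≤ b i)
    (S Splus Sminus : Set (ℤ × ℤ))
    (hS : S = {p | ∃ i, 1 ≤ i ∧ i ≤ n ∧ p = ((i : ℤ), b i)})
    (hSplus : Splus = {p | ∃ i, 1 ≤ i ∧ i ≤ n ∧ p.1 = (i : ℤ) ∧ b i < p.2})
    (hSminus : Sminus = {p | ∃ i, 1 ≤ i ∧ i ≤ n ∧ p.1 = (i : ℤ) ∧ p.2 < b i})
    (Y Y' : Set (ℤ × ℤ)) (hSY : S ⊆ Y) (hYY' : Y ∩ Splusᶜ = Y' ∩ Splusᶜ) :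
    bootClosure duarteU Y ∩ Sminus = bootClosure duarteU Y' ∩ Sminus := by
  -- P x: x is outside the "possibly discrepant" region
  set P : ℤ × ℤ → Prop :=
    fun x => x.1 ≤ (n : ℤ) ∧ ∀ i : ℕ, 1 ≤ i → i ≤ n → x.1 = (i : ℤ) → x.2 ≤ b i with hP
  have hScomp : S ⊆ Splusᶜ := by
    rintro p hp
    rw [hS] at hp
    obtain ⟨i, h1, h2, rfl⟩ := hp
    rw [hSplus]
    rintro ⟨j, hj1, hj2, hj3, hj4⟩
    simp only at hj3 hj4
    have hji : j = i := by exact_mod_cast hj3.symm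
    subst hji
    omega
  have hSY' : S ⊆ Y' := by
    intro p hp
    exact ((Set.ext_iff.mp hYY' p).mp ⟨hSY hp, hScomp hp⟩).1
  have hkey : ∀ x : ℤ × ℤ, P x → x ∉ S →
      ∀ d : ℤ × ℤ, d = (-1, 0) ∨ d = (0, 1) ∨ d = (0, -1) → P (d + x) := by
    intro x hx hxS d hd
    obtain ⟨h1, h2⟩ := hx
    have hx2 : ∀ i : ℕ, 1 ≤ i → i ≤ n → x.1 = (i : ℤ) → x.2 < b i := by
      intro i hi1 hi2 hi3
      have := h2 i hi1 hi2 hi3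
      rcases lt_or_eq_of_le this with h | h
      · exact h
      · exfalso; apply hxS; rw [hS]
        exact ⟨i, hi1, hi2, by rw [Prod.ext_iff]; exact ⟨hi3, h⟩⟩
    rcases hd with rfl | rfl | rfl
    · refine ⟨by simp [Prod.fst_add]; omega, ?_⟩
      intro i hi1 hi2 hi3
      simp only [Prod.fst_add, Prod.snd_add] at hi3 ⊢
      have hx1 : x.1 = (i : ℤ) + 1 := by omega
      by_cases h : i + 1 ≤ n
      · have := h2 (i + 1) (by omega) h (by push_cast; omega)
        have hbm := hb i hi1 (by omega)
        omega
      · exfalso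
        have : ((i : ℤ) + 1) ≤ (n : ℤ) := by omega
        have : (i : ℤ) + 1 ≤ (n : ℤ) := this
        push_cast at this
        omega
    · refine ⟨by simp [Prod.fst_add]; omega, ?_⟩
      intro i hi1 hi2 hi3
      simp only [Prod.fst_add, Prod.snd_add] at hi3 ⊢
      have := hx2 i hi1 hi2 (by omega)
      omega
    · refine ⟨by simp [Prod.fst_add]; omega, ?_⟩
      intro i hi1 hi2 hi3
      simp only [Prod.fst_add, Prod.snd_add] at hi3 ⊢
      have := h2 i hi1 hi2 (by omega)
      omega
  have hind : ∀ t (x : ℤ × ℤ), P x →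
      (x ∈ bootIter duarteU Y t ↔ x ∈ bootIter duarteU Y' t) := by
    intro t
    induction t with
    | zero =>
      intro x hx
      have hxp : x ∈ Splusᶜ := by
        rw [hSplus]
        rintro ⟨i, hi1, hi2, hi3, hi4⟩
        have := hx.2 i hi1 hi2 hi3
        omega
      constructor <;> intro h
      · exact ((Set.ext_iff.mp hYY' x).mp ⟨h, hxp⟩).1
      · exact ((Set.ext_iff.mp hYY' x).mpr ⟨h, hxp⟩).1
    | succ t ih =>
      intro x hx
      by_cases hxS : x ∈ S
      · exact ⟨fun _ => bootIter_self _ _ _ (hSY' hxS),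
               fun _ => bootIter_self _ _ _ (hSY hxS)⟩
      · have himg : ∀ X ∈ duarteU, ∀ Z Z' : Set (ℤ × ℤ),
            (∀ y : ℤ × ℤ, P y → (y ∈ Z ↔ y ∈ Z')) →
            (((fun y => y + x) '' X ⊆ Z) ↔ ((fun y => y + x) '' X ⊆ Z')) := by
          intro X hX Z Z' hZZ
          have hd : ∀ d ∈ X, d = ((-1 : ℤ), (0 : ℤ)) ∨ d = (0, 1) ∨ d = (0, -1) := by
            rcases hX with rfl | rfl | rfl <;>
              · intro d hd
                rcases hd with rfl | rfl <;> tauto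
          constructor <;> intro hsub <;> rintro p ⟨d, hdX, rfl⟩
          · exact (hZZ _ (hkey x hx hxS d (hd d hdX))).1 (hsub ⟨d, hdX, rfl⟩)
          · exact (hZZ _ (hkey x hx hxS d (hd d hdX))).2 (hsub ⟨d, hdX, rfl⟩)
        show x ∈ bootStep duarteU (bootIter duarteU Y t) ↔
          x ∈ bootStep duarteU (bootIter duarteU Y' t)
        unfold bootStep
        simp only [Set.mem_union, Set.mem_setOf_eq]
        constructor
        · rintro (h | ⟨X, hX, hsub⟩)
          · exact Or.inl ((ih x hx).1 h)
          · exact Or.inr ⟨X, hX, (himg X hX _ _ ih).1 hsub⟩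
        · rintro (h | ⟨X, hX, hsub⟩)
          · exact Or.inl ((ih x hx).2 h)
          · exact Or.inr ⟨X, hX, (himg X hX _ _ (fun y hy => (ih y hy).symm)).1 hsub⟩
  ext x
  simp only [Set.mem_inter_iff, bootClosure, Set.mem_iUnion]
  have hPm : x ∈ Sminus → P x := by
    rw [hSminus]
    rintro ⟨i, hi1, hi2, hi3, hi4⟩
    refine ⟨by omega, ?_⟩
    intro j hj1 hj2 hj3
    have : (j : ℤ) = (i : ℤ) := by omega
    have : j = i := by exact_mod_cast this
    subst this
    omega
  constructor
  · rintro ⟨⟨t, ht⟩, hm⟩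
    exact ⟨⟨t, (hind t x (hPm hm)).1 ht⟩, hm⟩
  · rintro ⟨⟨t, ht⟩, hm⟩
    exact ⟨⟨t, (hind t x (hPm hm)).2 ht⟩, hm⟩
end

section
/- (Duarte paths spread infection) Call Γ = (x⁽¹⁾,...,x⁽ⁿ⁾) ⊆ ℤ² a Duarte path if x⁽ⁱ⁺¹⁾ − x⁽ⁱ⁾ ∈ {e₁, e₂, −e₂} for all i ∈ [n−1]. Let I_Γ be the horizontal interval starting at x⁽¹⁾ and ending at the point with the same height as x⁽¹⁾ and the same first coordinate as x⁽ⁿ⁾. If Γ ⊆ [Y], then I_Γ ⊆ [Y]. -/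
open Set

lemma bootIter_mono (U : Set (Set (ℤ × ℤ))) (Y : Set (ℤ × ℤ)) {s t : ℕ} (h : s ≤ t) :
    bootIter U Y s ⊆ bootIter U Y t := by
  induction h with
  | refl => exact subset_rfl
  | step h ih => exact ih.trans (fun z hz => Or.inl hz)

lemma rule_mem (Y : Set (ℤ × ℤ)) (u v p : ℤ × ℤ)
    (hX : ({u, v} : Set (ℤ × ℤ)) ∈ duarteU)
    (hu : u + p ∈ bootClosure duarteU Y) (hv : v + p ∈ bootClosure duarteU Y) :
    p ∈ bootClosure duarteU Y := by
  obtain ⟨t₁, h₁⟩ := mem_iUnion.1 hu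
  obtain ⟨t₂, h₂⟩ := mem_iUnion.1 hv
  refine mem_iUnion.2 ⟨max t₁ t₂ + 1, Or.inr ⟨{u, v}, hX, ?_⟩⟩
  rintro z ⟨y, hy, rfl⟩
  rcases hy with rfl | rfl
  · exact bootIter_mono _ _ (le_max_left t₁ t₂) h₁
  · exact bootIter_mono _ _ (le_max_right t₁ t₂) h₂

lemma rule_up (Y : Set (ℤ × ℤ)) (p : ℤ × ℤ)
    (h1 : ((p.1 - 1, p.2) : ℤ × ℤ) ∈ bootClosure duarteU Y)
    (h2 : ((p.1, p.2 + 1) : ℤ × ℤ) ∈ bootClosure duarteU Y) :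
    p ∈ bootClosure duarteU Y := by
  refine rule_mem Y (-1, 0) (0, 1) p (by left; rfl) ?_ ?_
  · have : ((-1 : ℤ), (0 : ℤ)) + p = (p.1 - 1, p.2) := by
      ext <;> simp <;> ring
    rw [this]; exact h1
  · have : ((0 : ℤ), (1 : ℤ)) + p = (p.1, p.2 + 1) := by
      ext <;> simp <;> ring
    rw [this]; exact h2

lemma rule_down (Y : Set (ℤ × ℤ)) (p : ℤ × ℤ)
    (h1 : ((p.1 - 1, p.2) : ℤ × ℤ) ∈ bootClosure duarteU Y)
    (h2 : ((p.1, p.2 - 1) : ℤ × ℤ) ∈ bootClosure duarteU Y) :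
    p ∈ bootClosure duarteU Y := by
  refine rule_mem Y (-1, 0) (0, -1) p (by right; left; rfl) ?_ ?_
  · have : ((-1 : ℤ), (0 : ℤ)) + p = (p.1 - 1, p.2) := by
      ext <;> simp <;> ring
    rw [this]; exact h1
  · have : ((0 : ℤ), (-1 : ℤ)) + p = (p.1, p.2 - 1) := by
      ext <;> simp <;> ring
    rw [this]; exact h2

lemma fill_up (Y : Set (ℤ × ℤ)) (a b b0 : ℤ)
    (hcol : ∀ c, b0 ≤ c → c ≤ b → ((a, c) : ℤ × ℤ) ∈ bootClosure duarteU Y)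
    (htop : ((a + 1, b) : ℤ × ℤ) ∈ bootClosure duarteU Y) :
    ∀ c, b0 ≤ c → c ≤ b → ((a + 1, c) : ℤ × ℤ) ∈ bootClosure duarteU Y := by
  have key : ∀ k : ℕ, b0 ≤ b - k → ((a + 1, b - (k : ℤ)) : ℤ × ℤ) ∈ bootClosure duarteU Y := by
    intro k
    induction k with
    | zero => intro _; simpa using htop
    | succ k ih =>
      intro hk
      have hk' : b0 ≤ b - k := by push_cast at hk ⊢; omega
      have h2 : ((a + 1, b - (k : ℤ)) : ℤ × ℤ) ∈ bootClosure duarteU Y := ih hk'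
      have h1 : ((a, b - ((k : ℤ) + 1)) : ℤ × ℤ) ∈ bootClosure duarteU Y := by
        refine hcol _ (by push_cast at hk; omega) (by omega)
      have := rule_up Y (a + 1, b - ((k : ℤ) + 1)) (by simpa using h1)
        (by convert h2 using 2 <;> push_cast <;> ring)
      convert this using 2 <;> push_cast <;> ring
  intro c h1 h2
  have := key (b - c).toNat (by rw [Int.toNat_of_nonneg (by omega)]; omega)
  rwa [Int.toNat_of_nonneg (by omega), show b - (b - c) = c by ring] at this

lemma fill_down (Y : Set (ℤ × ℤ)) (a b b0 : ℤ)
    (hcol : ∀ c, b ≤ c → c ≤ b0 → ((a, c) : ℤ × ℤ) ∈ bootClosure duarteU Y)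
    (hbot : ((a + 1, b) : ℤ × ℤ) ∈ bootClosure duarteU Y) :
    ∀ c, b ≤ c → c ≤ b0 → ((a + 1, c) : ℤ × ℤ) ∈ bootClosure duarteU Y := by
  have key : ∀ k : ℕ, b + k ≤ b0 → ((a + 1, b + (k : ℤ)) : ℤ × ℤ) ∈ bootClosure duarteU Y := by
    intro k
    induction k with
    | zero => intro _; simpa using hbot
    | succ k ih =>
      intro hk
      have hk' : b + k ≤ b0 := by push_cast at hk ⊢; omega
      have h2 : ((a + 1, b + (k : ℤ)) : ℤ × ℤ) ∈ bootClosure duarteU Y := ih hk'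
      have h1 : ((a, b + ((k : ℤ) + 1)) : ℤ × ℤ) ∈ bootClosure duarteU Y := by
        refine hcol _ (by omega) (by push_cast at hk; omega)
      have := rule_down Y (a + 1, b + ((k : ℤ) + 1)) (by simpa using h1)
        (by convert h2 using 2 <;> push_cast <;> ring)
      convert this using 2 <;> push_cast <;> ring
  intro c h1 h2
  have := key (c - b).toNat (by rw [Int.toNat_of_nonneg (by omega)]; omega)
  rwa [Int.toNat_of_nonneg (by omega), show b + (c - b) = c by ring] at this

/-- Duarte paths spread infection: if a Duarte path `Γ = (x 0, …, x (n-1))`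
(steps in `{e₁, e₂, -e₂}`) is contained in `[Y]`, then the horizontal interval
`I_Γ`, starting at `x 0` and ending at the point with the same height as `x 0`
and the same first coordinate as `x (n-1)`, is contained in `[Y]`. -/
theorem stmt11 (Y : Set (ℤ × ℤ)) (n : ℕ) (hn : 1 ≤ n) (x : ℕ → ℤ × ℤ)
    (hstep : ∀ i, i + 1 < n →
      x (i + 1) - x i ∈ ({(1, 0), (0, 1), (0, -1)} : Set (ℤ × ℤ)))
    (hΓ : ∀ i < n, x i ∈ bootClosure duarteU Y) :
    ∀ c : ℤ, (x 0).1 ≤ c → c ≤ (x (n - 1)).1 →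
      ((c, (x 0).2) : ℤ × ℤ) ∈ bootClosure duarteU Y := by
  have main : ∀ i, i < n →
      (∀ c : ℤ, (x 0).1 ≤ c → c ≤ (x i).1 →
        ((c, (x 0).2) : ℤ × ℤ) ∈ bootClosure duarteU Y) ∧
      (∀ h : ℤ, ((x 0).2 ≤ h ∧ h ≤ (x i).2) ∨ ((x i).2 ≤ h ∧ h ≤ (x 0).2) →
        (((x i).1, h) : ℤ × ℤ) ∈ bootClosure duarteU Y) := by
    intro i
    induction i with
    | zero =>
      intro _
      have hx0 := hΓ 0 (by omega)
      constructor
      · intro c h1 h2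
        have hc : c = (x 0).1 := le_antisymm h2 h1
        subst hc
        simpa using hx0
      · intro h hh
        have hh' : h = (x 0).2 := by omega
        subst hh'
        simpa using hx0
    | succ i ih =>
      intro hi
      have hi' : i < n := by omega
      obtain ⟨ihH, ihC⟩ := ih hi'
      have hx1 := hΓ (i + 1) hi
      have hst := hstep i hi
      simp only [Set.mem_insert_iff, Set.mem_singleton_iff] at hst
      rcases hst with h | h | h
      all_goals have he : x (i + 1) = _ + x i := sub_eq_iff_eq_add.mp h
      · -- step e₁
        have e1 : (x (i + 1)).1 = (x i).1 + 1 := by rw [he, Prod.fst_add]; ring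
        have e2 : (x (i + 1)).2 = (x i).2 := by rw [he, Prod.snd_add]; ring
        have hxpt : (((x i).1 + 1, (x i).2) : ℤ × ℤ) ∈ bootClosure duarteU Y := by
          have : (((x i).1 + 1 : ℤ), (x i).2) = x (i + 1) := Prod.ext e1.symm e2.symm
          rw [this]; exact hx1
        rcases le_total ((x 0).2) ((x i).2) with hb | hb
        · have hfill := fill_up Y (x i).1 (x i).2 (x 0).2
            (fun c h1 h2 => ihC c (Or.inl ⟨h1, h2⟩)) hxpt
          constructor
          · intro c h1 h2
            rw [e1] at h2
            by_cases hc : c ≤ (x i).1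
            · exact ihH c h1 hc
            · have : c = (x i).1 + 1 := by omega
              subst this
              exact hfill _ le_rfl hb
          · intro h hh
            rw [e2] at hh
            rw [e1]
            exact hfill h (by omega) (by omega)
        · have hfill := fill_down Y (x i).1 (x i).2 (x 0).2
            (fun c h1 h2 => ihC c (Or.inr ⟨h1, h2⟩)) hxpt
          constructor
          · intro c h1 h2
            rw [e1] at h2
            by_cases hc : c ≤ (x i).1
            · exact ihH c h1 hc
            · have : c = (x i).1 + 1 := by omega
              subst this
              exact hfill _ hb le_rfl
          · intro h hh
            rw [e2] at hh
            rw [e1]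
            exact hfill h (by omega) (by omega)
      · -- step e₂
        have e1 : (x (i + 1)).1 = (x i).1 := by rw [he, Prod.fst_add]; ring
        have e2 : (x (i + 1)).2 = (x i).2 + 1 := by rw [he, Prod.snd_add]; ring
        constructor
        · intro c h1 h2
          rw [e1] at h2
          exact ihH c h1 h2
        · intro h hh
          rw [e2] at hh
          rw [e1]
          by_cases hhh : h = (x i).2 + 1
          · subst hhh
            have : (((x i).1 : ℤ), (x i).2 + 1) = x (i + 1) := Prod.ext e1.symm e2.symm
            rw [this]; exact hx1
          · exact ihC h (by omega)
      · -- step -e₂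
        have e1 : (x (i + 1)).1 = (x i).1 := by rw [he, Prod.fst_add]; ring
        have e2 : (x (i + 1)).2 = (x i).2 - 1 := by rw [he, Prod.snd_add]; ring
        constructor
        · intro c h1 h2
          rw [e1] at h2
          exact ihH c h1 h2
        · intro h hh
          rw [e2] at hh
          rw [e1]
          by_cases hhh : h = (x i).2 - 1
          · subst hhh
            have : (((x i).1 : ℤ), (x i).2 - 1) = x (i + 1) := Prod.ext e1.symm e2.symm
            rw [this]; exact hx1
          · exact ihC h (by omega)
  intro c h1 h2
  exact (main (n - 1) (by omega)).1 c h1 h2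
end

section
/- (East chain combinatorial bound implies impossibility) Suppose n₁ < log₂(M+1). Then there exists no path (η⁽⁰⁾,...,η⁽ᵏ⁾) in {0,1}^M such that: (1) η⁽⁰⁾ ≡ 0 and η⁽ᵏ⁾_M = 1; (2) every η in the path has at most n₁ coordinates equal to 1; (3) consecutive configurations differ in exactly one coordinate i, and if i ≠ 1 then the coordinate i−1 equals 1 in both configurations. -/
def cntW (a b : ℕ) (f : ℕ → Bool) : ℕ :=
  ((Finset.Icc (a+1) b).filter (fun i => f i = true)).card

lemma cnt_pos {a b : ℕ} {f : ℕ → Bool} {p : ℕ} (hp : f p = true) (hap : a < p) (hpb : p ≤ b) :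
    0 < cntW a b f := by
  apply Finset.card_pos.2
  exact ⟨p, Finset.mem_filter.2 ⟨Finset.mem_Icc.2 ⟨by omega, hpb⟩, hp⟩⟩

lemma cnt_elim {a b : ℕ} {f : ℕ → Bool} (h : 0 < cntW a b f) :
    ∃ p, a < p ∧ p ≤ b ∧ f p = true := by
  obtain ⟨p, hp⟩ := Finset.card_pos.1 h
  rw [Finset.mem_filter, Finset.mem_Icc] at hp
  exact ⟨p, by omega, hp.1.2, hp.2⟩

lemma cnt_congr {a b : ℕ} {f g : ℕ → Bool} (h : ∀ i, a < i → i ≤ b → f i = g i) :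
    cntW a b f = cntW a b g := by
  unfold cntW
  congr 1
  apply Finset.filter_congr
  intro x hx
  rw [Finset.mem_Icc] at hx
  rw [h x (by omega) hx.2]

lemma cnt_lower {a c b q : ℕ} {f : ℕ → Bool} (hq : f q = true) (haq : a < q) (hqc : q ≤ c)
    (hqb : q ≤ b) : cntW c b f + 1 ≤ cntW a b f := by
  have h1 : q ∉ (Finset.Icc (c+1) b).filter (fun i => f i = true) := by
    simp only [Finset.mem_filter, Finset.mem_Icc]
    intro h; omega
  have h2 : insert q ((Finset.Icc (c+1) b).filter (fun i => f i = true)) ⊆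
      (Finset.Icc (a+1) b).filter (fun i => f i = true) := by
    intro x hx
    rcases Finset.mem_insert.1 hx with rfl | hx
    · exact Finset.mem_filter.2 ⟨Finset.mem_Icc.2 ⟨by omega, hqb⟩, hq⟩
    · rw [Finset.mem_filter, Finset.mem_Icc] at hx ⊢
      exact ⟨⟨by omega, hx.1.2⟩, hx.2⟩
  calc cntW c b f + 1 = (insert q ((Finset.Icc (c+1) b).filter (fun i => f i = true))).card := by
        rw [Finset.card_insert_of_notMem h1]; unfold cntW; omega
    _ ≤ _ := Finset.card_le_card h2

lemma cnt_upper {a c b p : ℕ} {f : ℕ → Bool} (hp : f p = true) (hap : a < p) (hcp : c < p)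
    (hpb : p ≤ b) : cntW a c f + 1 ≤ cntW a b f := by
  have h1 : p ∉ (Finset.Icc (a+1) c).filter (fun i => f i = true) := by
    simp only [Finset.mem_filter, Finset.mem_Icc]
    intro h; omega
  have h2 : insert p ((Finset.Icc (a+1) c).filter (fun i => f i = true)) ⊆
      (Finset.Icc (a+1) b).filter (fun i => f i = true) := by
    intro x hx
    rcases Finset.mem_insert.1 hx with rfl | hx
    · exact Finset.mem_filter.2 ⟨Finset.mem_Icc.2 ⟨by omega, hpb⟩, hp⟩
    · rw [Finset.mem_filter, Finset.mem_Icc] at hx ⊢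
      exact ⟨⟨hx.1.1, by omega⟩, hx.2⟩
  calc cntW a c f + 1 = (insert p ((Finset.Icc (a+1) c).filter (fun i => f i = true))).card := by
        rw [Finset.card_insert_of_notMem h1]; unfold cntW; omega
    _ ≤ _ := Finset.card_le_card h2

lemma cnt_two {a b p q : ℕ} {f : ℕ → Bool} (hp : f p = true) (hq : f q = true) (haq : a < q)
    (hqp : q < p) (hpb : p ≤ b) : cntW p b f + 2 ≤ cntW a b f := by
  have h1 : p ∉ (Finset.Icc (p+1) b).filter (fun i => f i = true) := by
    simp only [Finset.mem_filter, Finset.mem_Icc]; intro h; omega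
  have h1' : q ∉ insert p ((Finset.Icc (p+1) b).filter (fun i => f i = true)) := by
    simp only [Finset.mem_insert, Finset.mem_filter, Finset.mem_Icc]
    push_neg
    exact ⟨by omega, by intro h; omega⟩
  have h2 : insert q (insert p ((Finset.Icc (p+1) b).filter (fun i => f i = true))) ⊆
      (Finset.Icc (a+1) b).filter (fun i => f i = true) := by
    intro x hx
    rcases Finset.mem_insert.1 hx with rfl | hx
    · exact Finset.mem_filter.2 ⟨Finset.mem_Icc.2 ⟨by omega, by omega⟩, hq⟩
    rcases Finset.mem_insert.1 hx with rfl | hx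
    · exact Finset.mem_filter.2 ⟨Finset.mem_Icc.2 ⟨by omega, hpb⟩, hp⟩
    · rw [Finset.mem_filter, Finset.mem_Icc] at hx ⊢
      exact ⟨⟨by omega, hx.1.2⟩, hx.2⟩
  calc cntW p b f + 2
      = (insert q (insert p ((Finset.Icc (p+1) b).filter (fun i => f i = true)))).card := by
        rw [Finset.card_insert_of_notMem h1', Finset.card_insert_of_notMem h1]; unfold cntW; omega
    _ ≤ _ := Finset.card_le_card h2

lemma flip_site {g g' : ℕ → Bool} {i : ℕ} {v : Bool} (h : g' = Function.update g i v) {j : ℕ}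
    (hne : g' j ≠ g j) : j = i := by
  by_contra hji
  apply hne
  rw [h, Function.update_of_ne hji]

theorem restLemma (n : ℕ) : ∀ (N k : ℕ) (η : ℕ → ℕ → Bool) (a b : ℕ), 1 ≤ a →
    (∀ t < k, ∃ i, 1 ≤ i ∧ i ≤ N ∧ η (t+1) = Function.update (η t) i (!(η t i)) ∧
       (i ≠ 1 → η t (i-1) = true ∧ η (t+1) (i-1) = true)) →
    (∀ i, a < i → i ≤ b → η 0 i = false) →
    (∀ t ≤ k, cntW a b (η t) ≤ n) →
    (∀ t < k, η t (a+1) ≠ η (t+1) (a+1) → cntW a b (η t) < n ∧ cntW a b (η (t+1)) < n) →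
    ∀ t ≤ k, ∀ i, a < i → i ≤ b → a + 2^n ≤ i + 1 → η t i = false := by
  induction n with
  | zero =>
    intro N k η a b ha hsteps hemp hcnt hbdry t ht i hai hib _
    cases hv : η t i
    · rfl
    · exact absurd (hcnt t ht) (by have := cnt_pos hv hai hib; omega)
  | succ m ih =>
    intro N k η a b ha hsteps hemp hcnt hbdry
    -- Key claim K: whenever the window is nonempty, there is a one in (a, a + 2^m)
    have K : ∀ t ≤ k, ∀ p, a < p → p ≤ b → η t p = true →
        ∃ q, a < q ∧ q < a + 2^m ∧ η t q = true := by
      classical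
      intro t ht p0 hap0 hp0b hp0
      set F := (Finset.Icc (a+1) b).filter (fun i => η t i = true) with hFdef
      have hp0F : p0 ∈ F := Finset.mem_filter.2 ⟨Finset.mem_Icc.2 ⟨by omega, hp0b⟩, hp0⟩
      have hFne : F.Nonempty := ⟨p0, hp0F⟩
      set p := F.min' hFne with hpdef
      have hpF : p ∈ F := F.min'_mem hFne
      have hpIcc := Finset.mem_Icc.1 (Finset.mem_filter.1 hpF).1
      have hap : a < p := by omega
      have hpb : p ≤ b := hpIcc.2
      have hp : η t p = true := (Finset.mem_filter.1 hpF).2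
      have hmin : ∀ x, a < x → x ≤ b → η t x = true → p ≤ x := fun x h1 h2 h3 =>
        F.min'_le x (Finset.mem_filter.2 ⟨Finset.mem_Icc.2 ⟨by omega, h2⟩, h3⟩)
      by_cases hsplit : p < a + 2^m
      · exact ⟨p, hap, hsplit, hp⟩
      push_neg at hsplit
      exfalso
      have hex : ∃ s, ∀ r, s ≤ r → r ≤ t → η r p = true :=
        ⟨t, fun r h1 h2 => by rwa [le_antisymm h2 h1]⟩
      set s := Nat.find hex with hsdef
      have hsspec : ∀ r, s ≤ r → r ≤ t → η r p = true := Nat.find_spec hex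
      have hst : s ≤ t := Nat.find_le (fun r h1 h2 => by rwa [le_antisymm h2 h1])
      have hs1 : 1 ≤ s := by
        rcases Nat.eq_zero_or_pos s with h0 | h
        · exfalso
          have := hsspec 0 (by omega) (by omega)
          rw [hemp p hap hpb] at this
          exact Bool.false_ne_true this
        · exact h
      have hprev : η (s-1) p = false := by
        have hmin' := Nat.find_min hex (m := s-1) (by omega)
        push_neg at hmin'
        obtain ⟨r, hr1, hr2, hr3⟩ := hmin'
        have hr : r = s - 1 := by
          by_contra h
          exact hr3 (hsspec r (by omega) hr2)
        rw [← hr]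
        cases hv : η r p
        · rfl
        · exact absurd hv hr3
      obtain ⟨ip, hip1, hipN, hupd, hsupp⟩ := hsteps (s-1) (by omega)
      have hs11 : s - 1 + 1 = s := by omega
      rw [hs11] at hupd hsupp
      have hipp : p = ip :=
        flip_site hupd (j := p) (by rw [hsspec s le_rfl hst, hprev]; simp)
      rw [← hipp] at hupd hsupp hip1 hipN
      by_cases hpa1 : p = a + 1
      · have hbdr := hbdry (s-1) (by omega)
          (by rw [hs11, ← hpa1, hsspec s le_rfl hst, hprev]; simp)
        rw [hs11] at hbdr
        have hpos := cnt_pos (hsspec s le_rfl hst) hap hpb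
        have hm00 : m = 0 := by
          by_contra hh
          have := Nat.one_lt_two_pow_iff.2 hh
          omega
        omega
      · have hpa2 : a + 2 ≤ p := by omega
        obtain ⟨hA, hB⟩ := hsupp (by omega)
        have hrev : η (t - (t - (s-1))) (p-1) = false := by
          refine ih N (t - (s-1)) (fun j x => η (t - j) x) a (p-1) ha ?_ ?_ ?_ ?_
            (t - (s-1)) le_rfl (p-1) (by omega) le_rfl (by omega)
          · -- reversed steps
            intro j hj
            obtain ⟨i', h1, h2, h3, h4⟩ := hsteps (t - j - 1) (by omega)
            have e1 : t - (j+1) = t - j - 1 := by omega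
            have e2 : t - j - 1 + 1 = t - j := by omega
            rw [e2] at h3 h4
            refine ⟨i', h1, h2, ?_, ?_⟩
            · show η (t - (j+1)) = Function.update (η (t - j)) i' (!(η (t - j) i'))
              rw [e1]
              funext x
              by_cases hx : x = i'
              · subst hx
                rw [Function.update_self, h3, Function.update_self, Bool.not_not]
              · rw [Function.update_of_ne hx, h3, Function.update_of_ne hx]
            · intro hne
              have h5 := h4 hne
              show η (t - j) (i' - 1) = true ∧ η (t - (j+1)) (i' - 1) = true
              rw [e1]
              exact ⟨h5.2, h5.1⟩
          · -- reversed initial emptiness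
            intro x h1 h2
            show η (t - 0) x = false
            rw [Nat.sub_zero]
            cases hv : η t x
            · rfl
            · exact absurd (hmin x h1 (by omega) hv) (by omega)
          · -- reversed window count
            intro j hj
            show cntW a (p-1) (η (t - j)) ≤ m
            by_cases hrs : s ≤ t - j
            · have hpr : η (t - j) p = true := hsspec _ hrs (by omega)
              have h6 := cnt_upper (b := b) (c := p-1) hpr hap (by omega) hpb
              have h7 := hcnt (t - j) (by omega)
              omega
            · have hr : t - j = s - 1 := by omega
              rw [hr]
              have heq : cntW a (p-1) (η (s-1)) = cntW a (p-1) (η s) := by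
                apply cnt_congr
                intro x h1 h2
                rw [hupd, Function.update_of_ne (by omega : x ≠ p)]
              rw [heq]
              have h6 := cnt_upper (b := b) (c := p-1) (hsspec s le_rfl hst) hap (by omega) hpb
              have h7 := hcnt s (by omega)
              omega
          · -- reversed boundary condition
            intro j hj hne
            have hne' : η (t - j - 1) ((a+1)) ≠ η ((t - j - 1) + 1) (a+1) := by
              rw [show t - j - 1 + 1 = t - j by omega]
              have : η (t - j) (a+1) ≠ η (t - (j+1)) (a+1) := hne
              rw [show t - (j+1) = t - j - 1 by omega] at this
              exact this.symm
            obtain ⟨i', h1, h2, h3, h4⟩ := hsteps (t - j - 1) (by omega)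
            have hi' : a + 1 = i' := flip_site h3 (by
              rw [show t - j - 1 + 1 = t - j by omega]
              rw [show t - j - 1 + 1 = t - j by omega] at hne'
              exact hne'.symm)
            have hrs : s ≤ t - j - 1 := by
              by_contra hc
              have he : t - j - 1 = s - 1 := by omega
              rw [he, hs11] at h3
              have : p = i' := flip_site h3 (j := p)
                (by rw [hsspec s le_rfl hst, hprev]; simp)
              omega
            have hpr : η (t - j - 1) p = true := hsspec _ hrs (by omega)
            have hpr1 : η (t - j) p = true := hsspec _ (by omega) (by omega)
            have hb := hbdry (t - j - 1) (by omega) hne'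
            rw [show t - j - 1 + 1 = t - j by omega] at hb
            have hu1 := cnt_upper (b := b) (c := p-1) hpr hap (by omega) hpb
            have hu2 := cnt_upper (b := b) (c := p-1) hpr1 hap (by omega) hpb
            constructor
            · show cntW a (p-1) (η (t - j)) < m
              omega
            · show cntW a (p-1) (η (t - (j+1))) < m
              rw [show t - (j+1) = t - j - 1 by omega]
              omega
        rw [show t - (t - (s-1)) = s - 1 by omega] at hrev
        rw [hrev] at hA
        exact Bool.false_ne_true hA
    intro t ht i hai hib hlb
    by_cases hm : m = 0
    · subst hm
      cases hv : η t i
      · rfl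
      · obtain ⟨q, hq1, hq2, _⟩ := K t ht i hai hib hv
        simp only [pow_zero] at hq2
        omega
    · have hm1 : 1 < 2^m := Nat.one_lt_two_pow_iff.2 hm
      have hpow : 2^(m+1) = 2^m + 2^m := by rw [pow_succ]; omega
      have hab : a + 2^m + 1 ≤ b := by omega
      refine ih N k η (a + 2^m) b (by omega) hsteps
        (fun i' h1 h2 => hemp i' (by omega) h2) ?_ ?_ t ht i (by omega) hib (by omega)
      · -- count in sub-window ≤ m
        intro r hr
        rcases Nat.eq_zero_or_pos (cntW (a + 2^m) b (η r)) with h0 | h0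
        · omega
        · obtain ⟨p, hp1, hp2, hp3⟩ := cnt_elim h0
          obtain ⟨q, hq1, hq2, hq3⟩ := K r hr p (by omega) hp2 hp3
          have := cnt_lower (a := a) (c := a + 2^m) (b := b) hq3 hq1 (by omega) (by omega)
          have := hcnt r hr
          omega
      · -- boundary condition for sub-window
        intro r hr hne
        obtain ⟨i', hi1, hi2, hupd, hsupp⟩ := hsteps r hr
        have hii : a + 2^m + 1 = i' := flip_site hupd (by simpa using hne.symm)
        obtain ⟨hA, hB⟩ := hsupp (by omega)
        rw [← hii] at hA hB
        simp only [Nat.add_sub_cancel] at hA hB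
        obtain ⟨q1, hq11, hq12, hq13⟩ := K r (le_of_lt hr) (a + 2^m) (by omega) (by omega) hA
        obtain ⟨q2, hq21, hq22, hq23⟩ := K (r+1) hr (a + 2^m) (by omega) (by omega) hB
        have h1 := cnt_two (b := b) hA hq13 hq11 (by omega) (by omega)
        have h2 := cnt_two (b := b) hB hq23 hq21 (by omega) (by omega)
        have h3 := hcnt r (le_of_lt hr)
        have h4 := hcnt (r+1) hr
        omega


/-- East chain combinatorics (impossibility form): if `n₁ < log₂(M+1)`, there is
no legal East path in `{0,1}^M` (coordinates `1,…,M`) from the all-zero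
configuration to a configuration with a `1` at coordinate `M` such that every
configuration along the path has at most `n₁` ones, where a legal step flips
exactly one coordinate `i ∈ [M]` and, if `i ≠ 1`, requires coordinate `i - 1`
to equal `1` in both configurations. -/
theorem stmt12 (M n₁ : ℕ) (hM : 1 ≤ M) (hn : (n₁ : ℝ) < Real.logb 2 (M + 1)) :
    ¬ ∃ (k : ℕ) (g : ℕ → ℕ → Bool),
      (∀ i, g 0 i = false) ∧
      g k M = true ∧
      (∀ j ≤ k, ((Finset.Icc 1 M).filter (fun i => g j i = true)).card ≤ n₁) ∧
      (∀ j < k, ∃ i, 1 ≤ i ∧ i ≤ M ∧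
        g (j + 1) = Function.update (g j) i (!(g j i)) ∧
        (i ≠ 1 → g j (i - 1) = true ∧ g (j + 1) (i - 1) = true)) := by
  rintro ⟨k, g, hzero, hfin, hcard, hsteps⟩
  -- from the log bound, 2 ^ n₁ ≤ M
  have hpow : 2 ^ n₁ ≤ M := by
    have h2 : (1:ℝ) < 2 := one_lt_two
    have hx : (0:ℝ) < (M:ℝ) + 1 := by positivity
    have hlt : (2:ℝ) ^ (n₁:ℝ) < (M:ℝ) + 1 := (Real.lt_logb_iff_rpow_lt h2 hx).1 hn
    rw [Real.rpow_natCast] at hlt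
    have : ((2 ^ n₁ : ℕ) : ℝ) < ((M + 1 : ℕ) : ℝ) := by push_cast; linarith
    have := Nat.cast_lt.1 this
    omega
  have hcnt0 : ∀ j ≤ k, cntW 0 M (g j) ≤ n₁ := by
    intro j hj
    have := hcard j hj
    simpa [cntW] using this
  by_cases hM1 : M = 1
  · -- then n₁ = 0 and even one `1` is too many
    have hn0 : n₁ = 0 := by
      have : (2:ℕ) ^ n₁ ≤ 1 := by omega
      by_contra hh
      have := Nat.one_lt_two_pow_iff.2 hh
      omega
    have h1 := hcnt0 k le_rfl
    have h2 := cnt_pos (a := 0) (b := M) hfin (by omega) le_rfl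
    omega
  · have hM2 : 2 ≤ M := by omega
    have hfalse := restLemma n₁ M k g 1 M le_rfl hsteps
      (fun i _ _ => hzero i) ?_ ?_ k le_rfl M (by omega) le_rfl (by omega)
    · rw [hfalse] at hfin
      exact Bool.false_ne_true hfin
    · -- window count
      intro t ht
      have h1 := hcnt0 t ht
      have h2 : cntW 1 M (g t) ≤ cntW 0 M (g t) := by
        apply Finset.card_le_card
        apply Finset.filter_subset_filter
        intro x hx
        rw [Finset.mem_Icc] at hx ⊢
        omega
      omega
    · -- boundary condition at site 2
      intro t ht hne
      obtain ⟨i, hi1, hiM, hupd, hsupp⟩ := hsteps t ht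
      have hii : 1 + 1 = i := flip_site hupd (by simpa using hne.symm)
      obtain ⟨hA, hB⟩ := hsupp (by omega)
      rw [← hii] at hA hB
      simp only [Nat.add_sub_cancel] at hA hB
      have h1 := cnt_lower (a := 0) (c := 1) (b := M) hA (by omega) le_rfl (by omega)
      have h2 := cnt_lower (a := 0) (c := 1) (b := M) hB (by omega) le_rfl (by omega)
      have h3 := hcnt0 t (le_of_lt ht)
      have h4 := hcnt0 (t+1) ht
      omega
end

section
/- (East chain combinatorial lower bound) Any legal East path on {0,1}^M starting from the all-zero configuration and ending in a configuration with a 1 at coordinate M must contain some configuration with at least ⌈log₂(M+1)⌉ coordinates equal to 1, where a legal step flips exactly one coordinate i and requires coordinate i−1 to be 1 when i > 1 (coordinate 1 is always flippable). -/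
/-!
Measure positions from a boundary site `p`, about whose state nothing is assumed. To create a one at
distance `d ≥ 2 ^ (n + 1)` one needs `n + 2` ones at some time. The first one to reach `[B, X]`,
`B = p + 2 ^ (n + 1)`, arrives exactly at `B`; by induction, with boundary `m = p + 2 ^ n`, some
earlier configuration has `n + 1` ones in `(m, B]`. If a further one sits in `(p, m]` we are done;
otherwise the leftmost one `ℓ ∈ (m, B]` is isolated. Reversing time, a path that removes an isolated
one at `ℓ` must first create a one at `ℓ - 1` from `(p, ℓ)` empty while `ℓ` stays occupied; by
induction this costs `⌈log₂ (ℓ - p)⌉ ≥ n + 1` ones besides the one at `ℓ`.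
-/

open Finset

theorem Nat.exists_first_time {P : ℕ → Prop} {T : ℕ} (h0 : ¬P 0) (hT : P T) :
    ∃ t < T, P (t + 1) ∧ ∀ v ≤ t, ¬P v := by
  classical
  have hex : ∃ s, P s := ⟨T, hT⟩
  obtain ⟨t, ht⟩ : ∃ t, Nat.find hex = t + 1 :=
    Nat.exists_eq_succ_of_ne_zero fun h => h0 (h ▸ Nat.find_spec hex)
  have hle := Nat.find_min' hex hT
  exact ⟨t, by omega, ht ▸ Nat.find_spec hex, fun v hv => Nat.find_min hex (by omega)⟩

namespace East

def Step (σ τ : ℕ → Bool) : Prop :=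
  ∃ i, 1 ≤ i ∧ τ = Function.update σ i (!σ i) ∧ (i ≠ 1 → σ (i - 1) = true)

def IsPath (h : ℕ → ℕ → Bool) (T : ℕ) : Prop :=
  ∀ j < T, Step (h j) (h (j + 1))

def onesIn (σ : ℕ → Bool) (p X : ℕ) : ℕ :=
  #{i ∈ Ioc p X | σ i = true}

section onesIn

variable {σ : ℕ → Bool} {p m X c : ℕ}

theorem one_le_onesIn (hpc : p < c) (hcX : c ≤ X) (hc : σ c = true) : 1 ≤ onesIn σ p X :=
  card_pos.2 ⟨c, by simp [hpc, hcX, hc]⟩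

theorem onesIn_add (hpm : p ≤ m) (hmX : m ≤ X) : onesIn σ p m + onesIn σ m X = onesIn σ p X := by
  rw [onesIn, onesIn, onesIn, ← card_union_of_disjoint, ← filter_union,
    Ioc_union_Ioc_eq_Ioc hpm hmX]
  exact disjoint_filter_filter (Ioc_disjoint_Ioc_of_le le_rfl)

theorem onesIn_mono_right (hmX : m ≤ X) : onesIn σ p m ≤ onesIn σ p X := by
  rcases le_total p m with hpm | hmp
  · exact (onesIn_add hpm hmX).le.trans' (Nat.le_add_right _ _)
  · simp [onesIn, Ioc_eq_empty_of_le hmp]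

theorem exists_leftmost_one (hpos : 0 < onesIn σ p X) :
    ∃ ℓ, p < ℓ ∧ ℓ ≤ X ∧ σ ℓ = true ∧ ∀ i, p < i → i < ℓ → σ i = false := by
  set S := {i ∈ Ioc p X | σ i = true}
  have hS : S.Nonempty := card_pos.1 hpos
  obtain ⟨⟨hpℓ, hℓX⟩, hℓ⟩ : (p < S.min' hS ∧ S.min' hS ≤ X) ∧ σ (S.min' hS) = true := by
    simpa [S] using S.min'_mem hS
  refine ⟨S.min' hS, hpℓ, hℓX, hℓ, fun i hpi hiℓ => ?_⟩
  by_contra hi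
  exact (S.min'_le i (by simp [S, hpi, hiℓ.le.trans hℓX, hi])).not_gt hiℓ

end onesIn

namespace Step

variable {σ τ : ℕ → Bool}

theorem symm (hστ : Step σ τ) : Step τ σ := by
  obtain ⟨i, hi, rfl, hfac⟩ := hστ
  refine ⟨i, hi, ?_, fun hi1 => ?_⟩
  · simp
  · rw [Function.update_of_ne (by omega)]
    exact hfac hi1

theorem eq_update_of_ne {c : ℕ} (hστ : Step σ τ) (hc : σ c ≠ τ c) :
    τ = Function.update σ c (!σ c) ∧ (c ≠ 1 → σ (c - 1) = true) := by
  obtain ⟨i, -, rfl, hfac⟩ := hστ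
  obtain rfl : c = i := by
    by_contra hci
    exact hc (Function.update_of_ne hci ..).symm
  exact ⟨rfl, hfac⟩

end Step

namespace IsPath

variable {h : ℕ → ℕ → Bool} {T : ℕ}

theorem mono (hpath : IsPath h T) {T' : ℕ} (hT' : T' ≤ T) : IsPath h T' :=
  fun j hj => hpath j (hj.trans_le hT')

theorem reverse (hpath : IsPath h T) : IsPath (fun v => h (T - v)) T := by
  intro j hj
  have hstep := hpath (T - (j + 1)) (by omega)
  rw [show T - (j + 1) + 1 = T - j by omega] at hstep
  exact hstep.symm

theorem exists_arrival {B X c : ℕ} (hpath : IsPath h T) (hB : 0 < B)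
    (hempty : ∀ i, B ≤ i → i ≤ X → h 0 i = false) (hBc : B ≤ c) (hcX : c ≤ X)
    (hc : h T c = true) :
    ∃ t ≤ T, h t B = true ∧ ∀ v ≤ t, ∀ i, B < i → i ≤ X → h v i = false := by
  obtain ⟨t, htT, ⟨i, hBi, hiX, hi⟩, hbefore⟩ :=
    Nat.exists_first_time (P := fun v => ∃ i, B ≤ i ∧ i ≤ X ∧ h v i = true)
      (by simp +contextual [hempty]) ⟨c, hBc, hcX, hc⟩
  simp only [not_exists, not_and, Bool.not_eq_true] at hbefore
  obtain ⟨hupd, hfac⟩ :=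
    (hpath t htT).eq_update_of_ne (c := i) (by simp [hbefore t le_rfl i hBi hiX, hi])
  obtain rfl : i = B := by
    by_contra hiB
    simpa [hbefore t le_rfl (i - 1) (by omega) (by omega)] using hfac (by omega)
  refine ⟨t + 1, htT, hi, fun v hv j hij hjX => ?_⟩
  rcases hv.lt_or_eq with hv | rfl
  · exact hbefore v (by omega) j hij.le hjX
  · rw [hupd, Function.update_of_ne hij.ne']
    exact hbefore t le_rfl j hij.le hjX

end IsPath

def CreationBound (d : ℕ) : Prop :=
  ∀ (h : ℕ → ℕ → Bool) (T p X c : ℕ), IsPath h T → (∀ i, p < i → i ≤ X → h 0 i = false) →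
    p + d ≤ c → c ≤ X → h T c = true → ∃ u ≤ T, Nat.clog 2 (d + 1) ≤ onesIn (h u) p X

theorem CreationBound.isolation {e : ℕ} (hcreate : CreationBound e) {h : ℕ → ℕ → Bool} {T p : ℕ}
    (hpath : IsPath h T) (h0 : h 0 (p + e + 1) = false) (hT : h T (p + e + 1) = true)
    (hiso : ∀ i, p < i → i ≤ p + e → h T i = false) :
    ∃ u ≤ T, Nat.clog 2 (e + 1) + 1 ≤ onesIn (h u) p (p + e + 1) := by
  rcases Nat.eq_zero_or_pos e with rfl | he
  · exact ⟨T, le_rfl, by simpa using one_le_onesIn (lt_add_one p) le_rfl hT⟩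
  -- Run the path backwards: just before the one at `p + e + 1` is removed, `p + e` is occupied.
  obtain ⟨t, htT, hoff, hon⟩ :=
    Nat.exists_first_time (P := fun v => h (T - v) (p + e + 1) = false) (T := T)
      (by simpa using hT) (by simpa using h0)
  simp only [Bool.not_eq_false] at hon
  have hfac : h (T - t) (p + e) = true := by
    have hstep := hpath.reverse t htT
    simpa using (hstep.eq_update_of_ne (c := p + e + 1) (by simp [hon t le_rfl, hoff])).2 (by omega)
  obtain ⟨w, hwt, hw⟩ :=
    hcreate (fun v => h (T - v)) t p (p + e) (p + e) (hpath.reverse.mono htT.le)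
      (fun i hpi hie => by simpa using hiso i hpi hie) le_rfl le_rfl hfac
  refine ⟨T - w, by omega, ?_⟩
  rw [← onesIn_add (m := p + e) (by omega) (by omega)]
  have hlast := one_le_onesIn (c := p + e + 1) (lt_add_one (p + e)) le_rfl (hon w hwt)
  omega

theorem creationBound (d : ℕ) : CreationBound d := by
  induction d using Nat.strong_induction_on with
  | _ d ih =>
  intro h T p X c hpath hempty hdc hcX hcT
  rcases Nat.eq_zero_or_pos d with rfl | hd
  · exact ⟨T, le_rfl, by simp⟩
  obtain hsmall | ⟨n, hn⟩ : Nat.clog 2 (d + 1) ≤ 1 ∨ ∃ n, Nat.clog 2 (d + 1) = n + 2 :=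
    (le_or_gt _ 1).imp_right fun h2 => ⟨_, (Nat.sub_add_cancel h2).symm⟩
  · exact ⟨T, le_rfl, hsmall.trans (one_le_onesIn (by omega) hcX hcT)⟩
  have hpow : 2 ^ (n + 1) < d + 1 := (Nat.lt_clog_iff_pow_lt one_lt_two).1 (by omega)
  have hpow_succ : 2 ^ (n + 1) = 2 * 2 ^ n := by ring
  have hpos : 0 < 2 ^ n := by positivity
  set B := p + 2 ^ (n + 1) with hB
  set m := p + 2 ^ n with hm
  obtain ⟨t, htT, htB, hclear⟩ := hpath.exists_arrival (B := B) (by positivity)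
    (fun i hi hiX => hempty i (by omega) hiX) (by omega) hcX hcT
  obtain ⟨u, hut, hu⟩ := ih (2 ^ n) (by omega) h t m X B (hpath.mono htT)
    (fun i hi hiX => hempty i (by omega) hiX) (by omega) (by omega) htB
  have hclog : n + 1 ≤ Nat.clog 2 (2 ^ n + 1) := (Nat.lt_clog_iff_pow_lt one_lt_two).2 (by omega)
  by_cases hleft : ∃ i, p < i ∧ i ≤ m ∧ h u i = true
  · obtain ⟨i, hpi, him, hi⟩ := hleft
    refine ⟨u, hut.trans htT, ?_⟩
    rw [hn, ← onesIn_add (m := m) (by omega) (by omega)]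
    have := one_le_onesIn hpi him hi
    omega
  simp only [not_exists, not_and, Bool.not_eq_true] at hleft
  obtain ⟨ℓ, hmℓ, hℓX, hℓ, hbelow⟩ := exists_leftmost_one (show 0 < onesIn (h u) m X by omega)
  have hℓB : ℓ ≤ B := by
    by_contra! hBℓ
    simp [hclear u hut ℓ hBℓ hℓX] at hℓ
  obtain ⟨e, rfl⟩ : ∃ e, ℓ = p + e + 1 := ⟨ℓ - p - 1, by omega⟩
  obtain ⟨w, hwu, hw⟩ := (ih e (by omega)).isolation (hpath.mono (hut.trans htT))
    (hempty _ (by omega) hℓX) hℓ fun i hpi hie =>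
      if him : i ≤ m then hleft i hpi him else hbelow i (by omega) (by omega)
  have hclog' : n + 1 ≤ Nat.clog 2 (e + 1) := (Nat.lt_clog_iff_pow_lt one_lt_two).2 (by omega)
  have hmono := onesIn_mono_right (σ := h w) (p := p) hℓX
  exact ⟨w, by omega, by omega⟩

end East

theorem stmt13_general (M : ℕ) (k : ℕ) (g : ℕ → ℕ → Bool)
    (h0 : ∀ i, g 0 i = false)
    (hend : g k M = true)
    (hstep : ∀ j < k, ∃ i, 1 ≤ i ∧ i ≤ M ∧
      g (j + 1) = Function.update (g j) i (!(g j i)) ∧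
      (i ≠ 1 → g j (i - 1) = true)) :
    ∃ j ≤ k, Nat.clog 2 (M + 1) ≤
      ((Finset.Icc 1 M).filter (fun i => g j i = true)).card := by
  have hpath : East.IsPath g k := fun j hj => by
    obtain ⟨i, hi, -, hupd, hfac⟩ := hstep j hj
    exact ⟨i, hi, hupd, hfac⟩
  obtain ⟨j, hj, hcount⟩ :=
    East.creationBound M g k 0 M M hpath (fun i _ _ => h0 i) (by omega) le_rfl hend
  rw [East.onesIn, ← Finset.Icc_add_one_left_eq_Ioc] at hcount
  exact ⟨j, hj, hcount⟩

/-- East chain combinatorial lower bound (Chung–Diaconis–Graham): any legal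
East path in `{0,1}^M` (coordinates `1,…,M`) from the all-zero configuration to
a configuration with a `1` at coordinate `M` contains a configuration with at
least `⌈log₂(M+1)⌉` ones; a legal step flips exactly one coordinate `i ∈ [M]`
and requires coordinate `i - 1` to equal `1` when `i > 1` (coordinate `1` is
always flippable). -/
theorem stmt13 (M : ℕ) (hM : 1 ≤ M) (k : ℕ) (g : ℕ → ℕ → Bool)
    (h0 : ∀ i, g 0 i = false)
    (hend : g k M = true)
    (hstep : ∀ j < k, ∃ i, 1 ≤ i ∧ i ≤ M ∧
      g (j + 1) = Function.update (g j) i (!(g j i)) ∧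
      (i ≠ 1 → g j (i - 1) = true)) :
    ∃ j ≤ k, Nat.clog 2 (M + 1) ≤
      ((Finset.Icc 1 M).filter (fun i => g j i = true)).card :=
  stmt13_general M k g h0 hend hstep
end
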